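/- Let λ be a unit in R and s a positive integer. If the left ideal ⟨y^s − λ⟩_l is a two-sided ideal of R[x,y;ρ,θ], then θ^s = id_R and θ(λ) = λ. -/

import Mathlib

open Finsupp

namespace SkewBivar

variable {R : Type*} [CommRing R]

/-- The ring automorphism `ρ^i θ^j` attached to the monomial exponent `(i,j)`. -/
def σ (ρ θ : RingAut R) (p : ℕ × ℕ) : RingAut R := ρ ^ p.1 * θ ^ p.2

theorem σ_zero (ρ θ : RingAut R) : σ ρ θ 0 = 1 := by simp [σ]

theorem σ_add (ρ θ : RingAut R) (hc : Commute ρ θ) (p q : ℕ × ℕ) :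
    σ ρ θ (p + q) = σ ρ θ p * σ ρ θ q := by
  simp only [σ, Prod.fst_add, Prod.snd_add, pow_add]
  conv_rhs => rw [mul_assoc, ← mul_assoc (θ ^ p.2), (hc.symm.pow_pow p.2 q.1).eq, mul_assoc]
  rw [mul_assoc]

/-- Twisted convolution on finitely supported functions `ℕ × ℕ →₀ R`. -/
noncomputable def skmul (ρ θ : RingAut R) (f g : (ℕ × ℕ) →₀ R) : (ℕ × ℕ) →₀ R :=
  f.sum fun a r => g.sum fun b s => Finsupp.single (a + b) (r * σ ρ θ a s)

variable (ρ θ : RingAut R)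

theorem zero_skmul (g : (ℕ × ℕ) →₀ R) : skmul ρ θ 0 g = 0 := by
  simp [skmul]

theorem skmul_zero (f : (ℕ × ℕ) →₀ R) : skmul ρ θ f 0 = 0 := by
  simp [skmul]

theorem add_skmul (f₁ f₂ g : (ℕ × ℕ) →₀ R) :
    skmul ρ θ (f₁ + f₂) g = skmul ρ θ f₁ g + skmul ρ θ f₂ g := by
  unfold skmul
  rw [Finsupp.sum_add_index']
  · intro a
    simp
  · intro a r₁ r₂
    rw [← Finsupp.sum_add]
    congr 1
    ext b s
    rw [add_mul, Finsupp.single_add]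

theorem skmul_add (f g₁ g₂ : (ℕ × ℕ) →₀ R) :
    skmul ρ θ f (g₁ + g₂) = skmul ρ θ f g₁ + skmul ρ θ f g₂ := by
  unfold skmul
  rw [← Finsupp.sum_add]
  congr 1
  ext a r
  rw [Finsupp.sum_add_index']
  · intro b; simp
  · intro b s₁ s₂
    rw [map_add, mul_add, Finsupp.single_add]

theorem single_skmul_single (a b : ℕ × ℕ) (r s : R) :
    skmul ρ θ (Finsupp.single a r) (Finsupp.single b s)
      = Finsupp.single (a + b) (r * σ ρ θ a s) := by
  unfold skmul
  rw [Finsupp.sum_single_index, Finsupp.sum_single_index]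
  · simp
  · rw [Finsupp.sum_single_index] <;> simp

theorem one_skmul (f : (ℕ × ℕ) →₀ R) : skmul ρ θ (Finsupp.single 0 1) f = f := by
  unfold skmul
  rw [Finsupp.sum_single_index]
  · simp only [σ_zero, zero_add, one_mul]
    exact Finsupp.sum_single f
  · simp

theorem skmul_one (f : (ℕ × ℕ) →₀ R) : skmul ρ θ f (Finsupp.single 0 1) = f := by
  unfold skmul
  conv_rhs => rw [← f.sum_single]
  congr 1
  ext a r
  rw [Finsupp.sum_single_index] <;> simp

theorem skmul_assoc (hc : Commute ρ θ) (f g h : (ℕ × ℕ) →₀ R) :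
    skmul ρ θ (skmul ρ θ f g) h = skmul ρ θ f (skmul ρ θ g h) := by
  induction f using Finsupp.induction generalizing g h with
  | zero => simp [zero_skmul]
  | single_add a r f' _ _ ihf =>
    rw [add_skmul, add_skmul, add_skmul, ihf]
    congr 1
    induction g using Finsupp.induction generalizing h with
    | zero => simp [zero_skmul, skmul_zero]
    | single_add b s g' _ _ ihg =>
      rw [skmul_add, add_skmul, add_skmul, skmul_add, ihg]
      congr 1
      induction h using Finsupp.induction with
      | zero => simp [skmul_zero]
      | single_add c t h' _ _ ihh =>
        rw [skmul_add, skmul_add, skmul_add, ihh]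
        congr 1
        rw [single_skmul_single, single_skmul_single, single_skmul_single,
          single_skmul_single, σ_add ρ θ hc, add_assoc]
        rw [map_mul, ← mul_assoc]
        rfl

/-- The bivariate skew polynomial ring `R[x,y;ρ,θ]`, realized as finitely supported
functions on exponent pairs, with the twisted convolution product. -/
def _root_.SkewPoly (R : Type*) [CommRing R] (ρ θ : RingAut R) : Type _ := (ℕ × ℕ) →₀ R

noncomputable instance : AddCommGroup (SkewPoly R ρ θ) :=
  inferInstanceAs (AddCommGroup ((ℕ × ℕ) →₀ R))

noncomputable instance [Fact (Commute ρ θ)] : Ring (SkewPoly R ρ θ) where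
  __ := (inferInstanceAs (AddCommGroup ((ℕ × ℕ) →₀ R)) : AddCommGroup ((ℕ × ℕ) →₀ R))
  mul f g := skmul ρ θ f g
  one := Finsupp.single 0 1
  mul_assoc f g h := skmul_assoc ρ θ Fact.out f g h
  one_mul := one_skmul ρ θ
  mul_one := skmul_one ρ θ
  left_distrib := skmul_add ρ θ
  right_distrib f g h := add_skmul ρ θ f g h
  zero_mul := zero_skmul ρ θ
  mul_zero := skmul_zero ρ θ

end SkewBivar

namespace SkewPoly

open SkewBivar

variable {R : Type*} [CommRing R] {ρ θ : RingAut R}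

/-- The monomial `a·x^i·y^j` of `R[x,y;ρ,θ]`. -/
noncomputable def monomial (ρ θ : RingAut R) (i j : ℕ) (a : R) : SkewPoly R ρ θ :=
  Finsupp.single (i, j) a

/-- The coefficient of `x^p.1·y^p.2` in a bivariate skew polynomial. -/
def coeff (f : SkewPoly R ρ θ) (p : ℕ × ℕ) : R :=
  (show (ℕ × ℕ) →₀ R from f) p

theorem mul_def [Fact (Commute ρ θ)] (f g : SkewPoly R ρ θ) :
    f * g = skmul ρ θ f g := rfl

theorem monomial_mul_monomial [Fact (Commute ρ θ)] (i j k t : ℕ) (a b : R) :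
    monomial ρ θ i j a * monomial ρ θ k t b
      = monomial ρ θ (i + k) (j + t) (a * (σ ρ θ (i, j)) b) := by
  show skmul ρ θ (Finsupp.single (i, j) a) (Finsupp.single (k, t) b) = _
  rw [single_skmul_single]
  rfl

/-- A nonzero bivariate skew polynomial has quasi-degree `(k,t)` if its `(k,t)` coefficient
is nonzero while every coefficient `(i,j)` with `(i,j) → (k,t)` (i.e. `j > t`, or `j = t` and
`i > k`) vanishes. -/
def HasQuasiDeg (f : SkewPoly R ρ θ) (k t : ℕ) : Prop :=
  coeff f (k, t) ≠ 0 ∧ ∀ i j : ℕ, (t < j ∨ (j = t ∧ k < i)) → coeff f (i, j) = 0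

/-- A bivariate skew polynomial is monic if its leading coefficient is `1`. -/
def Monic (f : SkewPoly R ρ θ) : Prop :=
  ∃ k t : ℕ, HasQuasiDeg f k t ∧ coeff f (k, t) = 1

/-- A left ideal that is in fact a two-sided ideal. -/
def IsTwoSidedIdeal [Fact (Commute ρ θ)] (I : Ideal (SkewPoly R ρ θ)) : Prop :=
  ∀ a ∈ I, ∀ b : SkewPoly R ρ θ, a * b ∈ I

theorem coeff_sub' (f g : SkewPoly R ρ θ) (p : ℕ × ℕ) :
    coeff (f - g) p = coeff f p - coeff g p := rfl

theorem mul_single_eq_sum [Fact (Commute ρ θ)] (f : SkewPoly R ρ θ) (b : ℕ × ℕ) (c : R) :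
    f * monomial ρ θ b.1 b.2 c
      = Finsupp.sum f fun a r => Finsupp.single (a + b) (r * σ ρ θ a c) := by
  show skmul ρ θ f (Finsupp.single b c) = _
  unfold skmul
  refine Finsupp.sum_congr fun a _ => ?_
  rw [Finsupp.sum_single_index]
  simp

theorem coeff_mul_single [Fact (Commute ρ θ)] (f : SkewPoly R ρ θ) (b p : ℕ × ℕ) (c : R) :
    coeff (f * monomial ρ θ b.1 b.2 c) p
      = Finsupp.sum f fun a r => if a + b = p then r * σ ρ θ a c else 0 := by
  rw [mul_single_eq_sum]
  show (Finsupp.sum f fun a r => Finsupp.single (a + b) (r * σ ρ θ a c)) p = _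
  exact Finsupp.sum_apply.trans (Finsupp.sum_congr fun a _ => Finsupp.single_apply)

theorem coeff_mul_C [Fact (Commute ρ θ)] (f : SkewPoly R ρ θ) (c : R) (p : ℕ × ℕ) :
    coeff (f * monomial ρ θ 0 0 c) p = coeff f p * σ ρ θ p c := by
  rw [coeff_mul_single f (0, 0) p c]
  have hz : ∀ a : ℕ × ℕ, a + ((0 : ℕ), (0 : ℕ)) = a := fun a => by
    rw [Prod.ext_iff]; exact ⟨Nat.add_zero _, Nat.add_zero _⟩
  simp only [hz]
  erw [Finsupp.sum_ite_eq']
  by_cases hp : p ∈ f.support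
  · rw [if_pos hp]; rfl
  · rw [if_neg hp]
    have : coeff f p = 0 := Finsupp.notMem_support_iff.mp hp
    rw [this, zero_mul]

theorem coeff_mul_ys [Fact (Commute ρ θ)] (f : SkewPoly R ρ θ) (t i j : ℕ) :
    coeff (f * monomial ρ θ 0 t 1) (i, j) = if t ≤ j then coeff f (i, j - t) else 0 := by
  rw [coeff_mul_single f (0, t) (i, j) 1]
  by_cases ht : t ≤ j
  · rw [if_pos ht]
    have hcond : ∀ a : ℕ × ℕ, (a + ((0 : ℕ), t) = (i, j)) ↔ a = (i, j - t) := by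
      intro a
      rw [Prod.ext_iff, Prod.ext_iff]
      simp only [Prod.fst_add, Prod.snd_add]
      change a.1 + 0 = i ∧ a.2 + t = j ↔ a.1 = i ∧ a.2 = j - t
      omega
    have : (Finsupp.sum f fun a r => if a + ((0 : ℕ), t) = (i, j) then r * σ ρ θ a 1 else 0)
        = Finsupp.sum f fun a r => if a = (i, j - t) then r else 0 := by
      refine Finsupp.sum_congr fun a _ => ?_
      rw [map_one, mul_one]
      congr 1
      exact propext (hcond a)
    rw [this]
    erw [Finsupp.sum_ite_eq']
    by_cases hp : (i, j - t) ∈ f.support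
    · rw [if_pos hp]; rfl
    · rw [if_neg hp]
      exact (Finsupp.notMem_support_iff.mp hp).symm
  · rw [if_neg ht]
    refine Finset.sum_eq_zero fun a _ => ?_
    dsimp only
    rw [if_neg]
    intro h
    have h2 : a.2 + t = j := congrArg Prod.snd h
    omega

theorem chain_zero {S : Type*} [CommRing S] (f : (ℕ × ℕ) →₀ S) (i j0 s : ℕ) (hs : 0 < s)
    (u : ℕ → S)
    (hrel : ∀ k : ℕ, f (i, j0 + k * s) = f (i, j0 + (k + 1) * s) * u k) (k : ℕ) :
    f (i, j0 + k * s) = 0 := by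
  have hbound : ∀ j, f.support.sup Prod.snd < j → f (i, j) = 0 := by
    intro j hj
    by_contra h
    have hm : ((i, j) : ℕ × ℕ) ∈ f.support := Finsupp.mem_support_iff.mpr h
    have := Finset.le_sup (f := Prod.snd) hm
    omega
  have key : ∀ m k : ℕ, f (i, j0 + (k + m) * s) = 0 → f (i, j0 + k * s) = 0 := by
    intro m
    induction m with
    | zero => intro k h; simpa using h
    | succ m ih =>
      intro k h
      have h' : f (i, j0 + (k + 1 + m) * s) = 0 := by
        have he : (k + 1 + m) * s = (k + (m + 1)) * s := by ring
        rw [he]; exact h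
      rw [hrel k, ih (k + 1) h', zero_mul]
  set M := f.support.sup Prod.snd with hM
  refine key (M + 1) k (hbound _ ?_)
  have h1 : k + (M + 1) ≤ (k + (M + 1)) * s := Nat.le_mul_of_pos_right _ hs
  omega

theorem key_eqs [Fact (Commute ρ θ)] (lam : Rˣ) (s : ℕ)
    (h2 : IsTwoSidedIdeal (Ideal.span {monomial ρ θ 0 s 1 - monomial ρ θ 0 0 (lam : R)}))
    (j1 : ℕ) (a : R) :
    ∃ c : (ℕ × ℕ) →₀ R, ∀ i j : ℕ,
      (if s ≤ j then c (i, j - s) else 0) - c (i, j) * (σ ρ θ (i, j)) (lam : R)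
        = (if ((0 : ℕ), s + j1) = (i, j) then (σ ρ θ ((0 : ℕ), s)) a else 0)
          - (if ((0 : ℕ), j1) = (i, j) then (lam : R) * a else 0) := by
  set g : SkewPoly R ρ θ := monomial ρ θ 0 s 1 - monomial ρ θ 0 0 (lam : R) with hg
  have hmem : g * monomial ρ θ 0 j1 a ∈ Ideal.span {g} :=
    h2 g (Ideal.subset_span rfl) _
  obtain ⟨c, hc⟩ := Submodule.mem_span_singleton.mp hmem
  rw [smul_eq_mul] at hc
  refine ⟨c, fun i j => ?_⟩
  have h : coeff (c * g) (i, j) = coeff (g * monomial ρ θ 0 j1 a) (i, j) :=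
    congrArg (fun q => coeff q (i, j)) hc
  rw [hg, mul_sub, sub_mul] at h
  erw [coeff_sub', coeff_sub'] at h
  rw [coeff_mul_ys, coeff_mul_C,
    monomial_mul_monomial, monomial_mul_monomial] at h
  have e1 : coeff (monomial ρ θ (0 + 0) (s + j1) (1 * (σ ρ θ ((0 : ℕ), s)) a)) (i, j)
      = if ((0 : ℕ), s + j1) = (i, j) then (σ ρ θ ((0 : ℕ), s)) a else 0 := by
    rw [one_mul]
    exact Finsupp.single_apply
  have e2 : coeff (monomial ρ θ (0 + 0) (0 + j1) ((lam : R) * (σ ρ θ ((0 : ℕ), (0 : ℕ))) a))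
      (i, j) = if ((0 : ℕ), j1) = (i, j) then (lam : R) * a else 0 := by
    have hσ : (σ ρ θ ((0 : ℕ), (0 : ℕ))) a = a := by
      show (ρ ^ 0 * θ ^ 0) a = a
      rw [pow_zero, pow_zero, one_mul]
      rfl
    rw [hσ]
    show (Finsupp.single ((0 + 0 : ℕ), (0 + j1 : ℕ)) ((lam : R) * a) : (ℕ × ℕ) →₀ R) (i, j)
      = if ((0 : ℕ), j1) = (i, j) then (lam : R) * a else 0
    rw [Finsupp.single_apply]
    norm_num
  rw [e1, e2] at h
  exact h

theorem unit_cancel (u : Rˣ) {x y : R} (h : x * (u : R) = y * (u : R)) : x = y := by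
  have := congrArg (· * ((u⁻¹ : Rˣ) : R)) h
  simpa [mul_assoc] using this

end SkewPoly

open SkewPoly in
/-- If `⟨y^s − λ⟩_l` is a two-sided ideal of `R[x,y;ρ,θ]` for a unit `λ`,
then `θ^s = id` and `θ(λ) = λ`. -/
theorem SkewPoly.of_isTwoSidedIdeal_span_Ys_sub
    {R : Type*} [CommRing R] (ρ θ : RingAut R) [Fact (Commute ρ θ)]
    (lam : Rˣ) (s : ℕ) (hs : 0 < s)
    (h2 : IsTwoSidedIdeal (Ideal.span {monomial ρ θ 0 s 1 - monomial ρ θ 0 0 (lam : R)})) :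
    θ ^ s = 1 ∧ θ (lam : R) = (lam : R) := by
  have hσ00 : (SkewBivar.σ ρ θ ((0 : ℕ), (0 : ℕ))) (lam : R) = (lam : R) := by
    show (ρ ^ 0 * θ ^ 0) (lam : R) = (lam : R)
    rw [pow_zero, pow_zero, one_mul]
    rfl
  -- Part 1 : θ^s = 1
  have hθs : ∀ a : R, (SkewBivar.σ ρ θ ((0 : ℕ), s)) a = a := by
    intro a
    obtain ⟨c, hc⟩ := key_eqs lam s h2 0 a
    have e00 := hc 0 0
    rw [if_neg (show ¬ s ≤ 0 by omega),
      if_neg (show ¬ ((0 : ℕ), s + 0) = ((0 : ℕ), (0 : ℕ)) by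
        simp only [Prod.mk.injEq]; omega),
      if_pos rfl, hσ00] at e00
    have hc00 : c (0, 0) = a := by
      refine unit_cancel lam ?_
      linear_combination -e00
    have hch : ∀ k, c (0, s + k * s) = 0 := by
      refine chain_zero c 0 s s hs
        (fun k => (SkewBivar.σ ρ θ ((0 : ℕ), s + (k + 1) * s)) (lam : R)) fun k => ?_
      have hm : (k + 1) * s = k * s + s := by ring
      have e := hc 0 (s + (k + 1) * s)
      rw [if_pos (show s ≤ s + (k + 1) * s by omega),
        if_neg (show ¬ ((0 : ℕ), s + 0) = ((0 : ℕ), s + (k + 1) * s) by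
          simp only [Prod.mk.injEq]; omega),
        if_neg (show ¬ ((0 : ℕ), (0 : ℕ)) = ((0 : ℕ), s + (k + 1) * s) by
          simp only [Prod.mk.injEq]; omega)] at e
      have hidx : s + (k + 1) * s - s = s + k * s := by omega
      rw [hidx] at e
      linear_combination e
    have hcs : c (0, s) = 0 := by simpa using hch 0
    have e0s := hc 0 s
    rw [if_pos le_rfl, if_pos (show ((0 : ℕ), s + 0) = ((0 : ℕ), s) by simp),
      if_neg (show ¬ ((0 : ℕ), (0 : ℕ)) = ((0 : ℕ), s) by
        simp only [Prod.mk.injEq]; omega),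
      Nat.sub_self, hc00, hcs] at e0s
    linear_combination -e0s
  have h1 : θ ^ s = 1 := by
    have hσs : SkewBivar.σ ρ θ ((0 : ℕ), s) = θ ^ s := by
      show ρ ^ 0 * θ ^ s = θ ^ s
      rw [pow_zero, one_mul]
    refine RingEquiv.ext fun a => ?_
    have := hθs a
    rw [hσs] at this
    exact this
  -- Part 2 : θ(λ) = λ
  obtain ⟨c, hc⟩ := key_eqs lam s h2 1 1
  have e00 := hc 0 0
  rw [if_neg (show ¬ s ≤ 0 by omega),
    if_neg (show ¬ ((0 : ℕ), s + 1) = ((0 : ℕ), (0 : ℕ)) by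
      simp only [Prod.mk.injEq]; omega),
    if_neg (show ¬ ((0 : ℕ), (1 : ℕ)) = ((0 : ℕ), (0 : ℕ)) by
      simp only [Prod.mk.injEq]; omega), hσ00] at e00
  have hc00 : c (0, 0) = 0 := by
    refine unit_cancel lam (y := 0) ?_
    linear_combination -e00
  have hch : ∀ k, c (0, (s + 1) + k * s) = 0 := by
    refine chain_zero c 0 (s + 1) s hs
      (fun k => (SkewBivar.σ ρ θ ((0 : ℕ), (s + 1) + (k + 1) * s)) (lam : R)) fun k => ?_
    have hm : (k + 1) * s = k * s + s := by ring
    have e := hc 0 ((s + 1) + (k + 1) * s)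
    rw [if_pos (show s ≤ (s + 1) + (k + 1) * s by omega),
      if_neg (show ¬ ((0 : ℕ), s + 1) = ((0 : ℕ), (s + 1) + (k + 1) * s) by
        simp only [Prod.mk.injEq]; omega),
      if_neg (show ¬ ((0 : ℕ), (1 : ℕ)) = ((0 : ℕ), (s + 1) + (k + 1) * s) by
        simp only [Prod.mk.injEq]; omega)] at e
    have hidx : (s + 1) + (k + 1) * s - s = (s + 1) + k * s := by omega
    rw [hidx] at e
    linear_combination e
  have hcs1 : c (0, s + 1) = 0 := by simpa using hch 0
  have e0s1 := hc 0 (s + 1)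
  rw [if_pos (show s ≤ s + 1 by omega), if_pos rfl,
    if_neg (show ¬ ((0 : ℕ), (1 : ℕ)) = ((0 : ℕ), s + 1) by
      simp only [Prod.mk.injEq]; omega)] at e0s1
  have hsub : s + 1 - s = 1 := by omega
  rw [hsub, hcs1, map_one] at e0s1
  have hc01 : c (0, 1) = 1 := by linear_combination e0s1
  have e01 := hc 0 1
  rw [if_neg (show ¬ ((0 : ℕ), s + 1) = ((0 : ℕ), (1 : ℕ)) by
      simp only [Prod.mk.injEq]; omega),
    if_pos rfl, hc01, one_mul] at e01
  have hσ01 : (SkewBivar.σ ρ θ ((0 : ℕ), (1 : ℕ))) (lam : R) = θ (lam : R) := by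
    show (ρ ^ 0 * θ ^ 1) (lam : R) = θ (lam : R)
    rw [pow_zero, one_mul, pow_one]
  rw [hσ01] at e01
  refine ⟨h1, ?_⟩
  by_cases hs1 : s ≤ 1
  · rw [if_pos hs1] at e01
    have h10 : (1 : ℕ) - s = 0 := by omega
    rw [h10, hc00] at e01
    linear_combination -e01
  · rw [if_neg hs1] at e01
    linear_combination -e01
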